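/- Suppose G is a finite abelian group with a subgroup H such that there is a strong starter in the quotient group G/H and a strong complete mapping of H. Then there is a strong frame starter in G \ H. -/

import Mathlib

open scoped Classical

variable {G : Type*} [AddCommGroup G]

/-- The multiset of all elements appearing in the pairs of `S`. -/
def starterElems (S : Finset (G × G)) : Multiset G :=
  S.val.bind fun p => {p.1, p.2}

/-- The multiset of all differences `±(x - y)` arising from the pairs of `S`. -/
def starterDiffs (S : Finset (G × G)) : Multiset G :=
  S.val.bind fun p => {p.1 - p.2, p.2 - p.1}

/-- `S` is a frame starter in `G \ H`: its pairs partition `G \ H` and its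
differences `±(x - y)` enumerate each element of `G \ H` exactly once. -/
def IsFrameStarter (H : AddSubgroup G) (S : Finset (G × G)) : Prop :=
  (∀ z : G, (starterElems S).count z = if z ∈ H then 0 else 1) ∧
  (∀ z : G, (starterDiffs S).count z = if z ∈ H then 0 else 1)

/-- A frame starter is strong if the pair sums are pairwise distinct and avoid `H`. -/
def IsStrongFrameStarter (H : AddSubgroup G) (S : Finset (G × G)) : Prop :=
  IsFrameStarter H S ∧
  (∀ p ∈ S, p.1 + p.2 ∉ H) ∧
  (∀ p ∈ S, ∀ q ∈ S, p.1 + p.2 = q.1 + q.2 → p = q)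

/-- A strong complete mapping of an abelian group. -/
def IsStrongCompleteMapping {A : Type*} [AddCommGroup A] (φ : A → A) : Prop :=
  Function.Bijective φ ∧ Function.Bijective (fun x => φ x - x) ∧
    Function.Bijective (fun x => φ x + x)

/-!
Choose representatives `ā` of the cosets of `H`, and lift every pair `(a, b)` of the strong
starter of `G ⧸ H` to the `|H|` pairs `(ā + φ h, b̄ + h)`, `h ∈ H`. Since `φ` is a bijection,
the lifted pairs cover the cosets `a + H` and `b + H` exactly once; their differences
`(ā - b̄) + (φ h - h)` and `(b̄ - ā) + (h - φ h)` run once through the cosets `±(a - b) + H`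
because `φ - id` is a bijection. The sum `(ā + b̄) + (φ h + h)` lies in the coset `a + b ≠ H`,
and sums of distinct lifted pairs differ: over distinct pairs of the quotient starter they lie
in distinct cosets, and over the same pair they differ because `φ + id` is injective.
-/

open Finset

section CosetCount

variable {H : AddSubgroup G} [Fintype H]

lemma count_map_add_coset {ψ : H → H} (hψ : Function.Bijective ψ) (c z : G) :
    (univ.val.map fun h => c + (ψ h : G)).count z = if (z : G ⧸ H) = c then 1 else 0 := by
  have hmap : (univ.val.map fun h => c + (ψ h : G)) = univ.val.map fun h : H => c + (h : G) := by
    conv_rhs => rw [← Multiset.map_univ_val_equiv (Equiv.ofBijective ψ hψ), Multiset.map_map]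
    rfl
  rw [hmap]
  split_ifs with hz
  · have hz' : z - c ∈ H := QuotientAddGroup.eq_iff_sub_mem.1 hz
    rw [show z = c + ((⟨z - c, hz'⟩ : H) : G) by simp,
      Multiset.count_map_eq_count' (fun h : H => c + (h : G)) _
        ((add_right_injective c).comp Subtype.val_injective)]
    exact Multiset.count_eq_one_of_mem univ.nodup (mem_univ _)
  · refine Multiset.count_eq_zero.2 fun hmem => hz ?_
    obtain ⟨h, -, rfl⟩ := Multiset.mem_map.1 hmem
    simp

lemma count_bind_add_coset_pairs {ι : Type*} (s : Multiset ι) (c d : ι → G) {ψ χ : H → H}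
    (hψ : Function.Bijective ψ) (hχ : Function.Bijective χ) (z : G) :
    (s.bind fun i => univ.val.bind fun h => {c i + (ψ h : G), d i + (χ h : G)}).count z =
      (s.bind fun i => {(c i : G ⧸ H), (d i : G ⧸ H)}).count (z : G ⧸ H) := by
  rw [Multiset.count_bind, Multiset.count_bind]
  congr 1
  refine Multiset.map_congr rfl fun i _ => ?_
  simp only [Multiset.insert_eq_cons, ← Multiset.singleton_add, Multiset.bind_add,
    Multiset.bind_singleton, Multiset.count_add, Multiset.count_singleton, count_map_add_coset hψ,
    count_map_add_coset hχ]

end CosetCount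

section LiftStarter

variable {H : AddSubgroup G} (φ : H → H)

noncomputable def liftPair (x : ((G ⧸ H) × (G ⧸ H)) × H) : G × G :=
  (x.1.1.out + φ x.2, x.1.2.out + x.2)

lemma liftPair_injective : Function.Injective (liftPair φ) := by
  rintro ⟨⟨a, b⟩, h⟩ ⟨⟨a', b'⟩, h'⟩ he
  simp only [liftPair, Prod.mk.injEq] at he
  have ha : a = a' := by simpa using congrArg (QuotientAddGroup.mk (s := H)) he.1
  have hb : b = b' := by simpa using congrArg (QuotientAddGroup.mk (s := H)) he.2
  subst ha hb
  simpa using he.2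

lemma liftPair_fst_add_snd (a b : G ⧸ H) (h : H) :
    (liftPair φ ((a, b), h)).1 + (liftPair φ ((a, b), h)).2 =
      a.out + b.out + ((φ h + h : H) : G) := by
  simp only [liftPair, AddSubgroup.coe_add]
  abel

lemma mk_liftPair_fst_add_snd (a b : G ⧸ H) (h : H) :
    (((liftPair φ ((a, b), h)).1 + (liftPair φ ((a, b), h)).2 : G) : G ⧸ H) = a + b := by
  simp [liftPair_fst_add_snd]

variable [Fintype H]

noncomputable def liftStarter (T : Finset ((G ⧸ H) × (G ⧸ H))) : Finset (G × G) :=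
  (T ×ˢ univ).map ⟨liftPair φ, liftPair_injective φ⟩

variable {φ}

lemma liftStarter_val_bind {β : Type*} (T : Finset ((G ⧸ H) × (G ⧸ H)))
    (g : G × G → Multiset β) :
    (liftStarter φ T).val.bind g =
      T.val.bind fun p => univ.val.bind fun h => g (liftPair φ (p, h)) := by
  rw [liftStarter, Finset.map_val, Multiset.bind_map, Finset.product_val]
  simp only [SProd.sprod, Multiset.product, Multiset.bind_assoc, Multiset.bind_map]
  rfl

lemma mem_liftStarter {T : Finset ((G ⧸ H) × (G ⧸ H))} {q : G × G} :
    q ∈ liftStarter φ T ↔ ∃ p ∈ T, ∃ h : H, liftPair φ (p, h) = q := by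
  simp [liftStarter]

lemma count_starterElems_liftStarter (hφ : Function.Bijective φ)
    (T : Finset ((G ⧸ H) × (G ⧸ H))) (z : G) :
    (starterElems (liftStarter φ T)).count z = (starterElems T).count (z : G ⧸ H) := by
  rw [starterElems, liftStarter_val_bind]
  convert count_bind_add_coset_pairs T.val (fun p => p.1.out) (fun p => p.2.out) hφ
    Function.bijective_id z using 3
  · rfl
  · simp [starterElems]

lemma count_starterDiffs_liftStarter (hφ : Function.Bijective fun x => φ x - x)
    (T : Finset ((G ⧸ H) × (G ⧸ H))) (z : G) :
    (starterDiffs (liftStarter φ T)).count z = (starterDiffs T).count (z : G ⧸ H) := by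
  have hφ' : Function.Bijective fun x => x - φ x := by
    simpa [Function.comp_def] using neg_involutive.bijective.comp hφ
  rw [starterDiffs, liftStarter_val_bind]
  convert count_bind_add_coset_pairs T.val (fun p => p.1.out - p.2.out)
    (fun p => p.2.out - p.1.out) hφ hφ' z using 3
  · congr 1
    funext h
    simp only [liftPair, AddSubgroup.coe_sub]
    congr 2 <;> abel
  · simp [starterDiffs]

lemma IsFrameStarter.liftStarter {T : Finset ((G ⧸ H) × (G ⧸ H))}
    (hT : IsFrameStarter (⊥ : AddSubgroup (G ⧸ H)) T) (hφ : Function.Bijective φ)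
    (hφsub : Function.Bijective fun x => φ x - x) : IsFrameStarter H (liftStarter φ T) := by
  -- `convert` reconciles the classical `DecidableEq (G ⧸ H)` inside `hT` with the quotient's own.
  refine ⟨fun z => ?_, fun z => ?_⟩
  · rw [count_starterElems_liftStarter hφ]
    convert hT.1 (z : G ⧸ H) using 2
    simp [QuotientAddGroup.eq_zero_iff]
  · rw [count_starterDiffs_liftStarter hφsub]
    convert hT.2 (z : G ⧸ H) using 2
    simp [QuotientAddGroup.eq_zero_iff]

lemma IsStrongFrameStarter.liftStarter {T : Finset ((G ⧸ H) × (G ⧸ H))}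
    (hT : IsStrongFrameStarter (⊥ : AddSubgroup (G ⧸ H)) T) (hφ : IsStrongCompleteMapping φ) :
    IsStrongFrameStarter H (liftStarter φ T) := by
  obtain ⟨hTframe, hTsum, hTinj⟩ := hT
  obtain ⟨hφ, hφsub, hφadd⟩ := hφ
  refine ⟨hTframe.liftStarter hφ hφsub, ?_, ?_⟩
  · intro q hq hmem
    obtain ⟨⟨a, b⟩, hab, h, rfl⟩ := mem_liftStarter.1 hq
    refine hTsum (a, b) hab (AddSubgroup.mem_bot.2 ?_)
    rw [← mk_liftPair_fst_add_snd φ a b h]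
    exact (QuotientAddGroup.eq_zero_iff _).2 hmem
  · intro q hq q' hq' hsum
    obtain ⟨⟨a, b⟩, hab, h, rfl⟩ := mem_liftStarter.1 hq
    obtain ⟨⟨a', b'⟩, hab', h', rfl⟩ := mem_liftStarter.1 hq'
    have hpair : (a, b) = (a', b') := hTinj _ hab _ hab' <| by
      simpa only [mk_liftPair_fst_add_snd] using congrArg (QuotientAddGroup.mk (s := H)) hsum
    obtain ⟨rfl, rfl⟩ := Prod.mk.inj hpair
    rw [liftPair_fst_add_snd, liftPair_fst_add_snd] at hsum
    rw [hφadd.1 (Subtype.val_injective (add_left_cancel hsum))]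

end LiftStarter

theorem stmt_14 [Fintype G] (H : AddSubgroup G)
    (hT : ∃ T : Finset ((G ⧸ H) × (G ⧸ H)),
      IsStrongFrameStarter (⊥ : AddSubgroup (G ⧸ H)) T)
    (hφ : ∃ φ : H → H, IsStrongCompleteMapping φ) :
    ∃ S : Finset (G × G), IsStrongFrameStarter H S := by
  obtain ⟨T, hT⟩ := hT
  obtain ⟨φ, hφ⟩ := hφ
  exact ⟨liftStarter φ T, hT.liftStarter hφ⟩
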